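/- Define A(n,g) for n ≥ 1 and g ≥ 0 by the polynomial identity ∑_{g≥0} A(n,g)·x^{n+1-2g} = ((2n)!/(2^n n!(n+1)!))·∑_{k=0}^n C(n,k)·(x+n-k)_{n+1}. Then Chapuy's recursion holds: 2g·A(n,g) = ∑_{k=1}^{g} C(n+1-2(g-k), 2k+1)·A(n, g-k). -/

import Mathlib

/-!
Write `(x + a)_{n+1}` for the falling factorial and `Q(x) = ∑_k C(n,k) (x+n-k)_{n+1}`.
Both `(x+a+1)(x+a)_{n+1}` and `(x+a-n)(x+a+1)_{n+1}` equal `(x+a+1)_{n+2}`; combining this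
at `a` and `a - 1` and summing against the binomial weights (using `C(n,k)(n-k) = C(n,k+1)(k+1)`)
gives the difference equation `x (Q(x+1) - Q(x-1)) = 2(n+1) Q(x)`. The coefficient of `x^d` in
`Q(x+1) - Q(x-1)` is `2 ∑_k C(d+2k+1, 2k+1) q_{d+2k+1}`, so comparing coefficients of
`x^{n+1-2g}` turns the difference equation into Chapuy's recursion. When `2g > n` both sides
vanish, because `Q(0) = 0`.
-/

open Finset Polynomial

namespace Finset

theorem sum_range_choose_mul_sub_smul_succ {R M : Type*} [Ring R] [AddCommGroup M] [Module R M]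
    (n : ℕ) (f : ℕ → M) :
    ∑ k ∈ range (n + 1), ((n.choose k : R) * ((n : R) - k)) • f (k + 1) =
      ∑ k ∈ range (n + 1), ((n.choose k : R) * k) • f k := by
  rw [sum_range_succ, sum_range_succ']
  simp only [sub_self, mul_zero, zero_smul, add_zero, Nat.cast_zero]
  refine sum_congr rfl fun k hk => ?_
  have hkn : k ≤ n := (mem_range.1 hk).le
  have h := congrArg (Nat.cast : ℕ → R) (Nat.choose_succ_right_eq n k)
  push_cast [Nat.cast_sub hkn] at h
  rw [Nat.cast_succ, h]

theorem sum_range_two_mul {M : Type*} [AddCommMonoid M] (f : ℕ → M) (N : ℕ) :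
    ∑ j ∈ range (2 * N), f j = ∑ k ∈ range N, (f (2 * k) + f (2 * k + 1)) := by
  induction N with
  | zero => simp
  | succ N ih => rw [Nat.mul_succ, sum_range_succ, sum_range_succ, ih, sum_range_succ, add_assoc]

end Finset

namespace Polynomial

variable {R : Type*} [CommRing R]

theorem taylor_descPochhammer_eq_prod (m : ℕ) (a : R) :
    taylor a (descPochhammer R m) = ∏ i ∈ range m, (X + C (a - i)) := by
  induction m with
  | zero => simp
  | succ m ih =>
    rw [descPochhammer_succ_right, taylor_mul, ih, prod_range_succ, taylor_apply, sub_comp, X_comp,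
      natCast_comp, ← C_eq_natCast, add_sub_assoc, ← C_sub]

theorem X_add_C_mul_taylor_descPochhammer (n : ℕ) (a : R) :
    (X + C (a + 1)) * taylor a (descPochhammer R (n + 1)) =
      (X + C (a - n)) * taylor (a + 1) (descPochhammer R (n + 1)) := by
  have hX : (X - 1 : R[X]) = X + C (-1) := by simp [sub_eq_add_neg]
  have hleft := congrArg (taylor (a + 1)) (descPochhammer_succ_left R (n + 1))
  have hright := congrArg (taylor (a + 1)) (descPochhammer_succ_right R (n + 1))
  rw [taylor_mul, taylor_X, hX, ← taylor_apply, taylor_taylor, add_neg_cancel_right] at hleft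
  rw [taylor_mul, map_sub, taylor_X, ← C_eq_natCast, taylor_C, add_sub_assoc, ← C_sub,
    Nat.cast_succ, add_sub_add_right_eq_sub] at hright
  rw [← hleft, hright, mul_comm]

theorem X_mul_taylor_descPochhammer_sub (n : ℕ) (a : R) :
    X * (taylor (a + 1) (descPochhammer R (n + 1)) - taylor (a - 1) (descPochhammer R (n + 1))) =
      C ((n : R) + 2) * taylor a (descPochhammer R (n + 1)) +
        C ((n : R) - a) * taylor (a + 1) (descPochhammer R (n + 1)) +
        C a * taylor (a - 1) (descPochhammer R (n + 1)) := by
  have h := X_add_C_mul_taylor_descPochhammer n a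
  have h' := X_add_C_mul_taylor_descPochhammer n (a - 1)
  rw [sub_add_cancel] at h'
  simp only [map_add, map_sub, map_one, C_ofNat] at h h' ⊢
  linear_combination -h - h'

/-- `∑_k C(n,k) (X + n - k)_{n+1}`, the falling factorial `(X + a)_{n+1}` being
`taylor a (descPochhammer R (n + 1))`. -/
noncomputable def unicellularPoly (R : Type*) [CommRing R] (n : ℕ) : R[X] :=
  ∑ k ∈ range (n + 1), (n.choose k : R) • taylor ((n : R) - k) (descPochhammer R (n + 1))

theorem natDegree_unicellularPoly_le [IsDomain R] (n : ℕ) :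
    (unicellularPoly R n).natDegree ≤ n + 1 :=
  natDegree_sum_le_of_forall_le _ _ fun _ _ =>
    (natDegree_smul_le _ _).trans (by rw [natDegree_taylor, descPochhammer_natDegree])

theorem taylor_unicellularPoly (n : ℕ) (b : R) :
    taylor b (unicellularPoly R n) =
      ∑ k ∈ range (n + 1),
        (n.choose k : R) • taylor ((n : R) - k + b) (descPochhammer R (n + 1)) := by
  simp only [unicellularPoly, map_sum, map_smul, taylor_taylor, add_comm b]

theorem X_mul_taylor_one_sub_taylor_neg_one_unicellularPoly (n : ℕ) :
    X * (taylor 1 (unicellularPoly R n) - taylor (-1) (unicellularPoly R n)) =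
      C (2 * ((n : R) + 1)) * unicellularPoly R n := by
  have hstep (k : ℕ) :
      X * ((n.choose k : R) • taylor ((n : R) - k + 1) (descPochhammer R (n + 1)) -
        (n.choose k : R) • taylor ((n : R) - k + -1) (descPochhammer R (n + 1))) =
      ((n.choose k : R) * ((n : R) + 2)) • taylor ((n : R) - k) (descPochhammer R (n + 1)) +
        ((n.choose k : R) * k) • taylor ((n : R) - k + 1) (descPochhammer R (n + 1)) +
        ((n.choose k : R) * ((n : R) - k)) •
          taylor ((n : R) - k - 1) (descPochhammer R (n + 1)) := by
    have h := X_mul_taylor_descPochhammer_sub n ((n : R) - k)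
    rw [sub_sub_cancel] at h
    simp only [← sub_eq_add_neg, smul_eq_C_mul, C_mul]
    linear_combination C (n.choose k : R) * h
  rw [taylor_unicellularPoly, taylor_unicellularPoly, ← sum_sub_distrib, mul_sum,
    sum_congr rfl fun k _ => hstep k, sum_add_distrib, sum_add_distrib]
  have hshift₁ := sum_range_choose_mul_sub_smul_succ (R := R) n
    fun k => taylor ((n : R) - k + 1) (descPochhammer R (n + 1))
  have hshift₂ := sum_range_choose_mul_sub_smul_succ (R := R) n
    fun k => taylor ((n : R) - k) (descPochhammer R (n + 1))
  simp only [Nat.cast_succ, sub_add_eq_sub_sub, sub_add_cancel] at hshift₁ hshift₂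
  rw [← hshift₁, hshift₂, ← sum_add_distrib, ← sum_add_distrib, unicellularPoly, mul_sum]
  refine sum_congr rfl fun k _ => ?_
  rw [← add_smul, ← add_smul, ← smul_eq_C_mul, smul_smul]
  ring_nf

theorem coeff_taylor_one_sub_taylor_neg_one (p : R[X]) {d N : ℕ} (hN : p.natDegree < d + 2 * N) :
    (taylor 1 p - taylor (-1) p).coeff d =
      2 * ∑ k ∈ range N,
        ((d + 2 * k + 1).choose (2 * k + 1) : R) * p.coeff (d + 2 * k + 1) := by
  obtain rfl | hN₀ := N.eq_zero_or_pos
  · have hcoeff (r : R) : (taylor r p).coeff d = 0 :=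
      coeff_eq_zero_of_natDegree_lt ((natDegree_taylor p r).trans_lt (by simpa using hN))
    simp [hcoeff]
  have hdeg : (hasseDeriv d p).natDegree < 2 * N :=
    (natDegree_hasseDeriv_le p d).trans_lt (by omega)
  rw [coeff_sub, taylor_coeff, taylor_coeff, eval_eq_sum_range' hdeg, eval_eq_sum_range' hdeg,
    ← sum_sub_distrib, sum_range_two_mul, mul_sum]
  refine sum_congr rfl fun k _ => ?_
  have hchoose : (2 * k + 1 + d).choose d = (2 * k + 1 + d).choose (2 * k + 1) :=
    Nat.choose_symm_of_eq_add (add_comm _ _)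
  simp only [hasseDeriv_coeff, pow_succ, pow_mul, one_pow, hchoose]
  ring_nf

section CharZero

variable {K : Type*} [Field K] [CharZero K]

theorem coeff_recursion_of_X_mul_taylor_one_sub_taylor_neg_one {q : K[X]} {n g : ℕ}
    (hq : X * (taylor 1 q - taylor (-1) q) = C (2 * ((n : K) + 1)) * q)
    (hdeg : q.natDegree ≤ n + 1) (hg : 2 * g ≤ n) :
    2 * (g : K) * q.coeff (n + 1 - 2 * g) =
      ∑ k ∈ Icc 1 g, ((n + 1 - 2 * (g - k)).choose (2 * k + 1) : K) *
        q.coeff (n + 1 - 2 * (g - k)) := by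
  obtain ⟨d, rfl⟩ : ∃ d, n = d + 2 * g := ⟨n - 2 * g, by omega⟩
  have h := congrArg (coeff · (d + 1)) hq
  simp only [coeff_X_mul, coeff_C_mul] at h
  rw [coeff_taylor_one_sub_taylor_neg_one q (N := g + 1) (by omega), sum_range_succ'] at h
  have hIcc (f : ℕ → K) : ∑ k ∈ Icc 1 g, f k = ∑ k ∈ range g, f (k + 1) := by
    rw [range_eq_Ico, sum_Ico_add', zero_add, Ico_add_one_right_eq_Icc]
  have hindex (k : ℕ) (hk : k ∈ range g) :
      d + 2 * g + 1 - 2 * (g - (k + 1)) = d + 2 * (k + 1) + 1 := by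
    simp only [mem_range] at hk; omega
  rw [hIcc, sum_congr rfl fun k hk => by rw [hindex k hk],
    show d + 2 * g + 1 - 2 * g = d + 1 by omega]
  simp only [mul_zero, zero_add, add_zero, Nat.choose_one_right] at h
  push_cast at h
  linear_combination -h / 2

theorem coeff_zero_eq_zero_of_X_mul_taylor_one_sub_taylor_neg_one {q : K[X]} {n : ℕ}
    (hq : X * (taylor 1 q - taylor (-1) q) = C (2 * ((n : K) + 1)) * q) : q.coeff 0 = 0 := by
  have h := congrArg (coeff · 0) hq
  simp only [coeff_X_mul_zero, coeff_C_mul, zero_eq_mul] at h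
  exact h.resolve_left (mul_ne_zero two_ne_zero n.cast_add_one_ne_zero)

theorem coeff_smul_unicellularPoly_recursion (c : K) (n g : ℕ) :
    2 * (g : K) * (c • unicellularPoly K n).coeff (n + 1 - 2 * g) =
      ∑ k ∈ Icc 1 g, ((n + 1 - 2 * (g - k)).choose (2 * k + 1) : K) *
        (c • unicellularPoly K n).coeff (n + 1 - 2 * (g - k)) := by
  set P := c • unicellularPoly K n
  have hdiff : X * (taylor 1 P - taylor (-1) P) = C (2 * ((n : K) + 1)) * P := by
    rw [map_smul, map_smul, ← smul_sub, mul_smul_comm,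
      X_mul_taylor_one_sub_taylor_neg_one_unicellularPoly, mul_smul_comm]
  have hdeg : P.natDegree ≤ n + 1 :=
    (natDegree_smul_le _ _).trans (natDegree_unicellularPoly_le n)
  rcases le_or_gt (2 * g) n with hg | hg
  · exact coeff_recursion_of_X_mul_taylor_one_sub_taylor_neg_one hdiff hdeg hg
  · rw [show n + 1 - 2 * g = 0 by omega,
      coeff_zero_eq_zero_of_X_mul_taylor_one_sub_taylor_neg_one hdiff, mul_zero]
    refine (sum_eq_zero fun k hk => ?_).symm
    rw [Nat.choose_eq_zero_of_lt (by simp only [mem_Icc] at hk; omega), Nat.cast_zero, zero_mul]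

end CharZero

end Polynomial

theorem stmt11_general (n : ℕ) (g : ℕ) :
    letI P : Polynomial ℚ :=
      (((2 * n).factorial : ℚ) / (2 ^ n * (n.factorial : ℚ) * ((n + 1).factorial : ℚ))) •
        ∑ k ∈ Finset.range (n + 1), (n.choose k : ℚ) •
          ∏ i ∈ Finset.range (n + 1), (X + C ((n : ℚ) - (k : ℚ) - (i : ℚ)))
    letI A : ℕ → ℚ := fun h => P.coeff (n + 1 - 2 * h)
    2 * (g : ℚ) * A g =
      ∑ k ∈ Finset.Icc 1 g, ((n + 1 - 2 * (g - k)).choose (2 * k + 1) : ℚ) * A (g - k) := by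
  have h := coeff_smul_unicellularPoly_recursion
    (((2 * n).factorial : ℚ) / (2 ^ n * (n.factorial : ℚ) * ((n + 1).factorial : ℚ))) n g
  simpa only [unicellularPoly, taylor_descPochhammer_eq_prod] using h

/-- Chapuy's recursion `2g·A(n,g) = ∑_{k=1}^g C(n+1-2(g-k), 2k+1)·A(n,g-k)`,
where `A(n,g)` is the coefficient of `x^(n+1-2g)` in
`((2n)!/(2^n n!(n+1)!))·∑_k C(n,k)(x+n-k)_{n+1}`. -/
theorem stmt11 (n : ℕ) (hn : 1 ≤ n) (g : ℕ) :
    letI P : Polynomial ℚ :=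
      (((2 * n).factorial : ℚ) / (2 ^ n * (n.factorial : ℚ) * ((n + 1).factorial : ℚ))) •
        ∑ k ∈ Finset.range (n + 1), (n.choose k : ℚ) •
          ∏ i ∈ Finset.range (n + 1), (X + C ((n : ℚ) - (k : ℚ) - (i : ℚ)))
    letI A : ℕ → ℚ := fun h => P.coeff (n + 1 - 2 * h)
    2 * (g : ℚ) * A g =
      ∑ k ∈ Finset.Icc 1 g, ((n + 1 - 2 * (g - k)).choose (2 * k + 1) : ℚ) * A (g - k) :=
  stmt11_general n g
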